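/- arXiv:2112.13886 — 2 statements merged into one kernel-verified Lean document; each statement's English description precedes it below -/
import Mathlib

section
/- If d = 3 divides p-1, then (6p² - 8p^{3/2} + 12p + 1)/27 ≤ V_4(p) ≤ (6p² + 8p^{3/2} + 12p + 1)/27. -/
/-!
Let `χ` be a cubic character with `w = χ(g)` and `τ = g(χ, ψ)` its Gauss sum. Splitting the
Gauss sums of `1`, `χ`, `χ²` along the cosets of the cubes gives the discrete Fourier transform
`η₀ + η₁ + η₂ = -1`, `η₀ + w η₁ + w² η₂ = τ`, `η₀ + w² η₁ + w η₂ = τ̄` (using `χ(-1) = 1`).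
Inverting it shows that the periods are real and that
`Σ ηₐ⁴ = (6|τ|⁴ + 12|τ|² + 1 - 8 Re τ³) / 27`; now `|τ|² = p` and `|Re τ³| ≤ p^{3/2}`.
-/

open Finset ComplexConjugate

theorem sum_range_mul_eq_sum_sum {M : Type*} [AddCommMonoid M] (f : ℕ → M) (d k : ℕ) :
    ∑ m ∈ range (d * k), f m = ∑ a ∈ range d, ∑ j ∈ range k, f (d * j + a) := by
  induction k with
  | zero => simp
  | succ k ih => simp only [Nat.mul_succ, sum_range_add, ih, sum_range_succ, ← sum_add_distrib]

theorem sum_eq_sum_range_pow_of_forall_mem_zpowers {G : Type*} [Group G] [Fintype G]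
    {M : Type*} [AddCommMonoid M] {g : G} (hg : ∀ x, x ∈ Subgroup.zpowers g) (f : G → M) :
    ∑ x, f x = ∑ m ∈ range (Nat.card G), f (g ^ m) := by
  classical
  rw [← IsCyclic.image_range_card hg, sum_image]
  rw [← orderOf_eq_card_of_forall_mem_zpowers hg]
  intro m hm n hn
  exact pow_injOn_Iio_orderOf (by simpa using hm) (by simpa using hn)

theorem sum_eq_sum_units {F : Type*} [Field F] [Fintype F] [DecidableEq F] {M : Type*}
    [AddCommMonoid M] {f : F → M} (hf : f 0 = 0) : ∑ x, f x = ∑ u : Fˣ, f u := by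
  rw [Fintype.sum_equiv unitsEquivNeZero (fun u : Fˣ => f u) (fun x => f x) (fun _ => rfl),
    ← sum_subtype (univ.filter (· ≠ 0)) (by simp), sum_filter_of_ne]
  rintro x - hx rfl
  exact hx hf

section DFT3

theorem sum_pow_four_eq_of_dft3 {K : Type*} [Field K] [CharZero K] {w x₀ x₁ x₂ r s t : K}
    (hw : w ^ 2 + w + 1 = 0) (h₀ : x₀ + x₁ + x₂ = r) (h₁ : x₀ + w * x₁ + w ^ 2 * x₂ = s)
    (h₂ : x₀ + w ^ 2 * x₁ + w * x₂ = t) :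
    x₀ ^ 4 + x₁ ^ 4 + x₂ ^ 4
      = (r ^ 4 + 4 * r * (s ^ 3 + t ^ 3) + 12 * r ^ 2 * s * t + 6 * s ^ 2 * t ^ 2) / 27 := by
  grind

theorem conj_eq_self_of_dft3 {w x₀ x₁ x₂ r s : ℂ} (hw : w ^ 2 + w + 1 = 0)
    (hwc : conj w = w ^ 2) (hr : conj r = r) (h₀ : x₀ + x₁ + x₂ = r)
    (h₁ : x₀ + w * x₁ + w ^ 2 * x₂ = s) (h₂ : x₀ + w ^ 2 * x₁ + w * x₂ = conj s) :
    conj x₀ = x₀ ∧ conj x₁ = x₁ ∧ conj x₂ = x₂ := by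
  -- the conjugates solve the same system, which has a unique solution
  have c₀ := congrArg conj h₀
  have c₁ := congrArg conj h₁
  have c₂ := congrArg conj h₂
  simp only [map_add, map_mul, map_pow, hwc, hr, Complex.conj_conj] at c₀ c₁ c₂
  refine ⟨by grind, by grind, by grind⟩

theorem norm_pow_four_eq_re_of_conj_eq_self {x : ℂ} (hx : conj x = x) :
    ‖x‖ ^ 4 = (x ^ 4).re := by
  rw [← Complex.conj_eq_iff_re.mp hx, ← Complex.ofReal_pow, Complex.ofReal_re, Complex.norm_real,
    Real.norm_eq_abs, pow_abs, abs_of_nonneg (by positivity)]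

theorem sum_norm_pow_four_eq_of_dft3 {w x₀ x₁ x₂ s : ℂ} (hw : w ^ 2 + w + 1 = 0)
    (hwc : conj w = w ^ 2) (h₀ : x₀ + x₁ + x₂ = -1)
    (h₁ : x₀ + w * x₁ + w ^ 2 * x₂ = s) (h₂ : x₀ + w ^ 2 * x₁ + w * x₂ = conj s) :
    ‖x₀‖ ^ 4 + ‖x₁‖ ^ 4 + ‖x₂‖ ^ 4 = (6 * ‖s‖ ^ 4 + 12 * ‖s‖ ^ 2 + 1 - 8 * (s ^ 3).re) / 27 := by
  obtain ⟨c₀, c₁, c₂⟩ := conj_eq_self_of_dft3 hw hwc (by simp) h₀ h₁ h₂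
  have hsq : s * conj s = ((‖s‖ ^ 2 : ℝ) : ℂ) := by exact_mod_cast Complex.mul_conj' s
  have hcube : s ^ 3 + conj s ^ 3 = ((2 * (s ^ 3).re : ℝ) : ℂ) := by
    rw [← map_pow, Complex.add_conj]
  suffices h : x₀ ^ 4 + x₁ ^ 4 + x₂ ^ 4
      = (((6 * ‖s‖ ^ 4 + 12 * ‖s‖ ^ 2 + 1 - 8 * (s ^ 3).re) / 27 : ℝ) : ℂ) by
    rw [norm_pow_four_eq_re_of_conj_eq_self c₀, norm_pow_four_eq_re_of_conj_eq_self c₁,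
      norm_pow_four_eq_re_of_conj_eq_self c₂, ← Complex.add_re, ← Complex.add_re, h,
      Complex.ofReal_re]
  rw [sum_pow_four_eq_of_dft3 hw h₀ h₁ h₂]
  push_cast at hsq hcube ⊢
  linear_combination (12 + 6 * (s * conj s + ‖s‖ ^ 2)) / 27 * hsq - 4 / 27 * hcube

end DFT3

def gaussianPeriod {R R' : Type*} [Ring R] [CommRing R'] (ψ : AddChar R R') (g : Rˣ)
    (d k a : ℕ) : R' :=
  ∑ j ∈ range k, ψ ↑(g ^ (d * j + a))

theorem MulChar.apply_sq_add_apply_add_one_eq_zero {R R' : Type*} [CommMonoid R] [CommRing R']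
    [IsDomain R'] {χ : MulChar R R'} (hχ : orderOf χ = 3) {g : Rˣ}
    (hg : ∀ x, x ∈ Subgroup.zpowers g) : χ g ^ 2 + χ g + 1 = 0 := by
  have hw3 : χ g ^ 3 = 1 := by
    rw [← MulChar.pow_apply_coe, ← hχ, pow_orderOf_eq_one, MulChar.one_apply_coe]
  have hw1 : χ g - 1 ≠ 0 := sub_ne_zero.mpr fun h => by
    rw [← MulChar.one_apply_coe g, ← MulChar.eq_iff hg] at h
    simp [h] at hχ
  exact (mul_right_inj' hw1).mp (by linear_combination hw3)

section FiniteField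

variable {F : Type*} [Field F] [Fintype F]

theorem gaussSum_eq_sum_pow_mul_gaussianPeriod {R' : Type*} [CommRing R'] [Nontrivial R']
    (χ : MulChar F R') (ψ : AddChar F R') {g : Fˣ} (hg : ∀ x, x ∈ Subgroup.zpowers g)
    {d k : ℕ} (hcard : Nat.card Fˣ = d * k) (hχ : χ g ^ d = 1) :
    gaussSum χ ψ = ∑ a ∈ range d, χ g ^ a * gaussianPeriod ψ g d k a := by
  classical
  rw [gaussSum, sum_eq_sum_units (by rw [MulChar.map_zero, zero_mul]),
    sum_eq_sum_range_pow_of_forall_mem_zpowers hg, hcard, sum_range_mul_eq_sum_sum]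
  refine sum_congr rfl fun a _ => ?_
  rw [gaussianPeriod, mul_sum]
  refine sum_congr rfl fun j _ => ?_
  rw [Units.val_pow_eq_pow_val, map_pow, pow_add, pow_mul, hχ, one_pow, one_mul]

theorem star_gaussSum_eq_of_odd_order {χ : MulChar F ℂ} {n : ℕ} (hn : Odd n) (hχ : χ ^ n = 1)
    (ψ : AddChar F ℂ) : star (gaussSum χ ψ) = gaussSum χ⁻¹ ψ := by
  rw [star_gaussSum_eq, ← mul_gaussSum_inv_eq_gaussSum χ⁻¹ ψ,
    MulChar.val_neg_one_eq_one_of_odd_order hn (by rw [inv_pow, hχ, inv_one]), one_mul]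

theorem norm_gaussSum_sq {χ : MulChar F ℂ} (hχ : χ ≠ 1) {ψ : AddChar F ℂ}
    (hψ : ψ.IsPrimitive) : ‖gaussSum χ ψ‖ ^ 2 = Fintype.card F := by
  have h := gaussSum_mul_gaussSum_eq_card hχ hψ
  rw [← star_gaussSum_eq, RCLike.star_def, Complex.mul_conj'] at h
  exact_mod_cast h

theorem exists_sum_norm_gaussianPeriod_pow_four {ψ : AddChar F ℂ} (hψ : ψ ≠ 1) {g : Fˣ}
    (hg : ∀ x, x ∈ Subgroup.zpowers g) {k : ℕ} (hk : Nat.card Fˣ = 3 * k) :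
    ∃ τ : ℂ, ‖τ‖ ^ 2 = Fintype.card F ∧
      ∑ a ∈ range 3, ‖gaussianPeriod ψ g 3 k a‖ ^ 4
        = (6 * (Fintype.card F : ℝ) ^ 2 + 12 * Fintype.card F + 1 - 8 * (τ ^ 3).re) / 27 := by
  classical
  have h3 : 3 ∣ Fintype.card F - 1 := by
    rw [← Fintype.card_units, ← Nat.card_eq_fintype_card, hk]
    exact dvd_mul_right 3 k
  obtain ⟨χ, hχ⟩ :=
    MulChar.exists_mulChar_orderOf F h3 (Complex.isPrimitiveRoot_exp 3 (by norm_num))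
  have hχ3 : χ ^ 3 = 1 := hχ ▸ pow_orderOf_eq_one χ
  have hχ1 : χ ≠ 1 := by rintro rfl; simp at hχ
  have hχinv : χ⁻¹ = χ ^ 2 := inv_eq_of_mul_eq_one_right (by rw [← pow_succ', hχ3])
  have hconj : conj (gaussSum χ ψ) = gaussSum (χ ^ 2) ψ := by
    rw [← RCLike.star_def, star_gaussSum_eq_of_odd_order (by decide) hχ3, hχinv]
  have h₀ := gaussSum_eq_sum_pow_mul_gaussianPeriod 1 ψ hg hk (by simp)
  have h₁ := gaussSum_eq_sum_pow_mul_gaussianPeriod χ ψ hg hk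
    (by rw [← MulChar.pow_apply_coe, hχ3, MulChar.one_apply_coe])
  have h₂ := gaussSum_eq_sum_pow_mul_gaussianPeriod (χ ^ 2) ψ hg hk
    (by rw [← MulChar.pow_apply_coe, ← pow_mul, pow_mul', hχ3, one_pow, MulChar.one_apply_coe])
  rw [gaussSum_one_left hψ] at h₀
  rw [← hconj] at h₂
  simp only [sum_range_succ, sum_range_zero, MulChar.one_apply_coe, MulChar.pow_apply_coe]
    at h₀ h₁ h₂
  have hw := MulChar.apply_sq_add_apply_add_one_eq_zero hχ hg
  set w := χ g
  have hwc : conj w = w ^ 2 := by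
    rw [← RCLike.star_def, MulChar.star_apply', hχinv, MulChar.pow_apply_coe]
  have hnorm := norm_gaussSum_sq hχ1 (AddChar.IsPrimitive.of_ne_one hψ)
  refine ⟨gaussSum χ ψ, hnorm, ?_⟩
  rw [sum_range_succ, sum_range_succ, sum_range_one, sum_norm_pow_four_eq_of_dft3
    (s := gaussSum χ ψ) hw hwc (by linear_combination -h₀) (by linear_combination -h₁)
    (by linear_combination -h₂ - gaussianPeriod ψ g 3 k 2 * w * (w - 1) * hw), ← hnorm]
  ring

end FiniteField

theorem gaussian_periods_V4_d3_bounds_general (p k : ℕ) (hp : p.Prime)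
    (hk : p - 1 = 3 * k)
    (g : (ZMod p)ˣ) (hg : ∀ x : (ZMod p)ˣ, x ∈ Subgroup.zpowers g)
    (η : ℕ → ℂ)
    (hη : ∀ a : ℕ, η a = ∑ j ∈ Finset.range k,
      Complex.exp (2 * (Real.pi : ℂ) * Complex.I *
        (((g ^ (3 * j + a) : (ZMod p)ˣ) : ZMod p).val : ℂ) / (p : ℂ))) :
    (6 * (p : ℝ) ^ 2 - 8 * (p : ℝ) ^ ((3 : ℝ) / 2) + 12 * p + 1) / 27
      ≤ ∑ s ∈ Finset.range 3, ‖η s‖ ^ 4 ∧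
    ∑ s ∈ Finset.range 3, ‖η s‖ ^ 4
      ≤ (6 * (p : ℝ) ^ 2 + 8 * (p : ℝ) ^ ((3 : ℝ) / 2) + 12 * p + 1) / 27 := by
  have := Fact.mk hp
  have hperiod (a : ℕ) : η a = gaussianPeriod ZMod.stdAddChar g 3 k a := by
    simp only [hη, gaussianPeriod, ZMod.stdAddChar_apply, ZMod.toCircle_apply]
  have hψ : (ZMod.stdAddChar : AddChar (ZMod p) ℂ) ≠ 1 := fun h => one_ne_zero <|
    ZMod.injective_stdAddChar (by rw [h, AddChar.one_apply, AddChar.map_zero_eq_one])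
  obtain ⟨τ, hτ, hV⟩ := exists_sum_norm_gaussianPeriod_pow_four hψ hg
    (by rw [Nat.card_eq_fintype_card, ZMod.card_units, hk])
  have hre : |(τ ^ 3).re| ≤ (p : ℝ) ^ ((3 : ℝ) / 2) := calc
    |(τ ^ 3).re| ≤ ‖τ ^ 3‖ := Complex.abs_re_le_norm _
    _ = (‖τ‖ ^ 2) ^ ((3 : ℝ) / 2) := by
      rw [norm_pow, ← Real.rpow_natCast_mul (norm_nonneg _)]; norm_num
    _ = (p : ℝ) ^ ((3 : ℝ) / 2) := by rw [hτ, ZMod.card]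
  simp only [hperiod, hV, ZMod.card]
  constructor <;> linarith [abs_le.mp hre]

/-- If `d = 3` divides `p-1`, then
`(6p² - 8p^{3/2} + 12p + 1)/27 ≤ V₄(p) ≤ (6p² + 8p^{3/2} + 12p + 1)/27`. -/
theorem gaussian_periods_V4_d3_bounds (p k : ℕ) (hp : p.Prime) (hodd : Odd p)
    (hk : p - 1 = 3 * k)
    (g : (ZMod p)ˣ) (hg : ∀ x : (ZMod p)ˣ, x ∈ Subgroup.zpowers g)
    (η : ℕ → ℂ)
    (hη : ∀ a : ℕ, η a = ∑ j ∈ Finset.range k,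
      Complex.exp (2 * (Real.pi : ℂ) * Complex.I *
        (((g ^ (3 * j + a) : (ZMod p)ˣ) : ZMod p).val : ℂ) / (p : ℂ))) :
    (6 * (p : ℝ) ^ 2 - 8 * (p : ℝ) ^ ((3 : ℝ) / 2) + 12 * p + 1) / 27
      ≤ ∑ s ∈ Finset.range 3, ‖η s‖ ^ 4 ∧
    ∑ s ∈ Finset.range 3, ‖η s‖ ^ 4
      ≤ (6 * (p : ℝ) ^ 2 + 8 * (p : ℝ) ^ ((3 : ℝ) / 2) + 12 * p + 1) / 27 :=
  gaussian_periods_V4_d3_bounds_general p k hp hk g hg η hη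
end

section
/- If d divides p-1, then ((d-1)p + 1)²/d³ ≤ V_4(p), and moreover V_4(p) ≤ ((d-1)(d² - 3d + 3)p² + 4(d-1)(d-2)p^{3/2} + 6(d-1)p + 1)/d³. -/
/-!
Let `ψ` be the standard additive character of `𝔽_p` and index the characters of order dividing
`d` as `χ ^ t` for `t : ZMod d`, where `χ g = exp (-2πi/d)`. Then the Gauss sums
`G t = gaussSum (χ ^ t) ψ` are exactly the discrete Fourier transform over `ZMod d` of the
periods `η`, and `|G 0| = 1`, `|G t| = √p` for `t ≠ 0`. Parseval gives
`∑ |η a|² = ((d - 1) p + 1) / d`, and the lower bound is Cauchy–Schwarz. For the upper bound,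
the transform of `η²` is the convolution `(1/d) ∑ₛ G s * G (t - s)`; bounding its terms by their
moduli and applying Parseval to `η²` gives the stated polynomial in `√p`.
-/

open Finset ZMod
open scoped ComplexConjugate

namespace ZMod

variable {N : ℕ} [NeZero N]

lemma sum_range_eq_sum_val {M : Type*} [AddCommMonoid M] (f : ℕ → M) :
    ∑ s ∈ range N, f s = ∑ a : ZMod N, f a.val := by
  obtain ⟨n, rfl⟩ := Nat.exists_eq_succ_of_ne_zero (NeZero.ne N)
  exact (Fin.sum_univ_eq_sum_range f _).symm

lemma sum_range_mul_eq_sum_val {M : Type*} [AddCommMonoid M] (k : ℕ) (f : ℕ → M) :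
    ∑ m ∈ range (N * k), f m = ∑ a : ZMod N, ∑ j ∈ range k, f (N * j + a.val) := by
  induction k with
  | zero => simp
  | succ k ih =>
    rw [Nat.mul_succ, sum_range_add, ih, sum_range_eq_sum_val, ← sum_add_distrib]
    simp only [sum_range_succ]

lemma sum_stdAddChar_mul_dft (Φ : ZMod N → ℂ) (j : ZMod N) :
    ∑ k, stdAddChar (k * j) * 𝓕 Φ k = N * Φ j := by
  have := congrFun ((dft (N := N) (E := ℂ)).symm_apply_apply Φ) j
  rw [invDFT_apply] at this
  simp only [smul_eq_mul] at this
  rw [← this, mul_inv_cancel_left₀ (NeZero.ne (N : ℂ))]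

lemma dft_mul_apply (Φ Ψ : ZMod N → ℂ) (k : ZMod N) :
    𝓕 (Φ * Ψ) k = (N : ℂ)⁻¹ * ∑ s, 𝓕 Φ s * 𝓕 Ψ (k - s) := by
  have hΦ (j : ZMod N) : (N : ℂ)⁻¹ * ∑ s, stdAddChar (s * j) * 𝓕 Φ s = Φ j := by
    rw [sum_stdAddChar_mul_dft, inv_mul_cancel_left₀ (NeZero.ne (N : ℂ))]
  calc 𝓕 (Φ * Ψ) k
      = ∑ j, stdAddChar (-(j * k)) * ((N : ℂ)⁻¹ * ∑ s, stdAddChar (s * j) * 𝓕 Φ s) * Ψ j := by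
        rw [dft_apply]
        simp only [hΦ, Pi.mul_apply, smul_eq_mul, mul_assoc]
    _ = (N : ℂ)⁻¹ * ∑ s, 𝓕 Φ s * ∑ j, stdAddChar (-(j * (k - s))) * Ψ j := by
        simp only [mul_sum, sum_mul]
        rw [sum_comm]
        refine sum_congr rfl fun s _ ↦ sum_congr rfl fun j _ ↦ ?_
        rw [show -(j * (k - s)) = -(j * k) + s * j by ring, AddChar.map_add_eq_mul]
        ring
    _ = (N : ℂ)⁻¹ * ∑ s, 𝓕 Φ s * 𝓕 Ψ (k - s) := by
        simp only [dft_apply, smul_eq_mul]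

lemma sum_norm_dft_sq (Φ : ZMod N → ℂ) : ∑ k, ‖𝓕 Φ k‖ ^ 2 = N * ∑ j, ‖Φ j‖ ^ 2 := by
  have hconj (k : ZMod N) : conj (𝓕 Φ k) = ∑ j, stdAddChar (k * j) * conj (Φ j) := by
    simp only [dft_apply, smul_eq_mul, map_sum, map_mul, ← AddChar.map_neg_eq_conj, neg_neg,
      mul_comm k]
  apply Complex.ofReal_injective
  push_cast
  simp only [← Complex.mul_conj', hconj, mul_sum]
  rw [sum_comm]
  refine sum_congr rfl fun j _ ↦ ?_
  rw [← mul_assoc, ← sum_stdAddChar_mul_dft, sum_mul]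
  exact sum_congr rfl fun _ _ ↦ by ring

lemma sum_ite_eq_zero {R : Type*} [CommRing R] (a b : R) :
    ∑ k : ZMod N, (if k = 0 then a else b) = a + (N - 1) * b := by
  have (k : ZMod N) : (if k = 0 then a else b) = b + if k = 0 then a - b else 0 := by
    split_ifs <;> ring
  simp only [this, sum_add_distrib, sum_const, card_univ, ZMod.card, nsmul_eq_mul,
    sum_ite_eq', mem_univ, if_true]
  ring

lemma sum_ite_mul_ite_sub {R : Type*} [CommRing R] (r : R) (k : ZMod N) :
    ∑ s : ZMod N, (if s = 0 then 1 else r) * (if k - s = 0 then 1 else r)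
      = if k = 0 then 1 + (N - 1) * r ^ 2 else 2 * r + (N - 2) * r ^ 2 := by
  split_ifs with hk
  · rw [← sum_ite_eq_zero]
    refine sum_congr rfl fun s _ ↦ ?_
    by_cases hs : s = 0 <;> simp [hk, hs, sq]
  · have (s : ZMod N) : (if s = 0 then 1 else r) * (if k - s = 0 then 1 else r)
        = r ^ 2 + (if s = 0 then r - r ^ 2 else 0) + (if s = k then r - r ^ 2 else 0) := by
      split_ifs <;> simp_all [sub_eq_zero]
      ring
    simp only [this, sum_add_distrib, sum_const, sum_ite_eq', mem_univ, if_true, card_univ,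
      ZMod.card, nsmul_eq_mul]
    ring

variable {Φ : ZMod N → ℂ} {r : ℝ}

lemma sum_norm_sq_of_norm_dft (hΦ : ∀ k, ‖𝓕 Φ k‖ = if k = 0 then 1 else r) :
    ∑ j, ‖Φ j‖ ^ 2 = (1 + (N - 1) * r ^ 2) / N := by
  rw [eq_div_iff (Nat.cast_ne_zero.mpr (NeZero.ne N)), mul_comm, ← sum_norm_dft_sq,
    ← sum_ite_eq_zero]
  refine sum_congr rfl fun k _ ↦ ?_
  rw [hΦ]
  split_ifs <;> simp

lemma le_sum_norm_pow_four_of_norm_dft (hΦ : ∀ k, ‖𝓕 Φ k‖ = if k = 0 then 1 else r) :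
    (1 + (N - 1) * r ^ 2) ^ 2 / N ^ 3 ≤ ∑ j, ‖Φ j‖ ^ 4 := by
  have hN : (0 : ℝ) < N := Nat.cast_pos.mpr (NeZero.pos N)
  have hCS := sq_sum_le_card_mul_sum_sq (s := univ) (f := fun j ↦ ‖Φ j‖ ^ 2)
  simp only [sum_norm_sq_of_norm_dft hΦ, card_univ, ZMod.card, ← pow_mul] at hCS
  rw [div_le_iff₀ (by positivity)]
  calc (1 + (N - 1) * r ^ 2) ^ 2 = N ^ 2 * ((1 + (N - 1) * r ^ 2) / N) ^ 2 := by
        field_simp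
    _ ≤ N ^ 2 * (N * ∑ j, ‖Φ j‖ ^ 4) := by gcongr
    _ = (∑ j, ‖Φ j‖ ^ 4) * N ^ 3 := by ring

lemma sum_norm_pow_four_le_of_norm_dft (hΦ : ∀ k, ‖𝓕 Φ k‖ = if k = 0 then 1 else r) :
    ∑ j, ‖Φ j‖ ^ 4
      ≤ ((1 + (N - 1) * r ^ 2) ^ 2 + (N - 1) * (2 * r + (N - 2) * r ^ 2) ^ 2) / N ^ 3 := by
  have hN : (0 : ℝ) < N := Nat.cast_pos.mpr (NeZero.pos N)
  have hconv (k : ZMod N) :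
      ‖𝓕 (Φ * Φ) k‖ ≤ (∑ s, ‖𝓕 Φ s‖ * ‖𝓕 Φ (k - s)‖) / N := by
    rw [dft_mul_apply, norm_mul, norm_inv, Complex.norm_natCast, inv_mul_eq_div]
    gcongr
    exact (norm_sum_le _ _).trans_eq (by simp only [norm_mul])
  calc ∑ j, ‖Φ j‖ ^ 4 = (∑ k, ‖𝓕 (Φ * Φ) k‖ ^ 2) / N := by
        rw [sum_norm_dft_sq, mul_div_cancel_left₀ _ hN.ne']
        simp only [Pi.mul_apply, norm_mul]
        exact sum_congr rfl fun _ _ ↦ by ring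
    _ ≤ (∑ k, ((∑ s, ‖𝓕 Φ s‖ * ‖𝓕 Φ (k - s)‖) / N) ^ 2) / N := by
        gcongr with k
        exact hconv k
    _ = _ := by
        simp only [hΦ, sum_ite_mul_ite_sub, apply_ite (fun x : ℝ ↦ (x / N) ^ 2), sum_ite_eq_zero]
        field_simp

end ZMod

lemma IsCyclic.sum_eq_sum_range_orderOf_pow {G M : Type*} [Group G] [Fintype G] [DecidableEq G]
    [AddCommMonoid M] {g : G} (hg : ∀ x, x ∈ Subgroup.zpowers g) (f : G → M) :
    ∑ x, f x = ∑ m ∈ range (orderOf g), f (g ^ m) := by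
  rw [← IsCyclic.image_range_orderOf hg, sum_image fun m hm n hn h ↦
    pow_injOn_Iio_orderOf (by simpa using hm) (by simpa using hn) h]

namespace MulChar

variable {R R' : Type*} [CommMonoid R]

lemma exists_apply_eq_of_forall_mem_zpowers [CommMonoidWithZero R'] {g : Rˣ}
    (hg : ∀ x, x ∈ Subgroup.zpowers g) {ω : R'ˣ} (hω : ω ^ orderOf g = 1) :
    ∃ χ : MulChar R R', χ g = ω :=
  ⟨ofUnitHom (monoidHomOfForallMemZpowers hg (orderOf_dvd_of_pow_eq_one hω)), by simp⟩

lemma sum_mul_eq_sum_units [CommSemiring R'] [Fintype R] [DecidableEq R] (χ : MulChar R R')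
    (f : R → R') : ∑ x, χ x * f x = ∑ u : Rˣ, χ u * f u := by
  calc ∑ x, χ x * f x = ∑ x ∈ univ.map ⟨((↑) : Rˣ → R), Units.val_injective⟩, χ x * f x := by
        refine (sum_subset (subset_univ _) fun x _ hx ↦ ?_).symm
        rw [map_nonunit χ fun hu ↦ hx (mem_map_of_mem _ (mem_univ hu.unit)), zero_mul]
    _ = ∑ u : Rˣ, χ u * f u := sum_map _ _ _

end MulChar

section GaussPeriod

variable {R : Type*} [CommRing R]

noncomputable def gaussPeriod (ψ : AddChar R ℂ) (g : Rˣ) (d k : ℕ) (a : ZMod d) : ℂ :=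
  ∑ j ∈ range k, ψ ↑(g ^ (d * j + a.val))

lemma dft_gaussPeriod [Fintype R] [DecidableEq R] (ψ : AddChar R ℂ) {g : Rˣ}
    (hg : ∀ x, x ∈ Subgroup.zpowers g) {d k : ℕ} [NeZero d] (hgk : orderOf g = d * k)
    {χ : MulChar R ℂ} (hχ : χ g = stdAddChar (-1 : ZMod d)) (t : ZMod d) :
    𝓕 (gaussPeriod ψ g d k) t = gaussSum (χ ^ t.val) ψ := by
  have hχpow (m : ℕ) : (χ ^ t.val) ↑(g ^ m) = stdAddChar (-((m : ZMod d) * t)) := by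
    rw [MulChar.pow_apply_coe, Units.val_pow_eq_pow_val, map_pow, hχ, ← pow_mul,
      ← AddChar.map_nsmul_eq_pow, nsmul_eq_mul]
    push_cast
    rw [natCast_zmod_val]
    ring_nf
  rw [gaussSum, MulChar.sum_mul_eq_sum_units, IsCyclic.sum_eq_sum_range_orderOf_pow hg, hgk,
    sum_range_mul_eq_sum_val, dft_apply]
  refine sum_congr rfl fun a _ ↦ ?_
  rw [gaussPeriod, smul_eq_mul, mul_sum]
  refine sum_congr rfl fun j _ ↦ ?_
  rw [hχpow]
  push_cast
  simp

lemma norm_gaussSum_of_ne_one {F : Type*} [Field F] [Fintype F] {χ : MulChar F ℂ} (hχ : χ ≠ 1)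
    {ψ : AddChar F ℂ} (hψ : ψ.IsPrimitive) : ‖gaussSum χ ψ‖ = √(Fintype.card F) := by
  have h := gaussSum_mul_gaussSum_eq_card hχ hψ
  rw [← star_gaussSum_eq, Complex.star_def, Complex.mul_conj'] at h
  rw [← Real.sqrt_sq (norm_nonneg _)]
  congr 1
  exact_mod_cast h

lemma norm_dft_gaussPeriod {F : Type*} [Field F] [Fintype F] [DecidableEq F] {ψ : AddChar F ℂ}
    (hψ : ψ.IsPrimitive) {g : Fˣ} (hg : ∀ x, x ∈ Subgroup.zpowers g) {d k : ℕ} [NeZero d]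
    (hgk : orderOf g = d * k) {χ : MulChar F ℂ} (hχ : χ g = stdAddChar (-1 : ZMod d))
    (t : ZMod d) :
    ‖𝓕 (gaussPeriod ψ g d k) t‖ = if t = 0 then 1 else √(Fintype.card F) := by
  rw [dft_gaussPeriod ψ hg hgk hχ]
  split_ifs with ht
  · have hψ1 : ψ ≠ 1 := by simpa [AddChar.mulShift_one] using hψ one_ne_zero
    rw [ht, val_zero, pow_zero, gaussSum_one_left hψ1, norm_neg, norm_one]
  · refine norm_gaussSum_of_ne_one (fun h ↦ ht ?_) hψ
    have h1 := congrArg (· (g : F)) h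
    simp only [MulChar.pow_apply_coe, hχ, ← AddChar.map_nsmul_eq_pow, MulChar.one_apply_coe,
      ← (stdAddChar (N := d)).map_zero_eq_one, injective_stdAddChar.eq_iff, nsmul_eq_mul,
      natCast_zmod_val] at h1
    simpa using h1

end GaussPeriod

theorem gaussian_periods_V4_bounds_general (p d k : ℕ) (hp : p.Prime)
    (hd : 2 < d) (hdk : p - 1 = d * k)
    (g : (ZMod p)ˣ) (hg : ∀ x : (ZMod p)ˣ, x ∈ Subgroup.zpowers g)
    (η : ℕ → ℂ)
    (hη : ∀ a : ℕ, η a = ∑ j ∈ Finset.range k,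
      Complex.exp (2 * (Real.pi : ℂ) * Complex.I *
        (((g ^ (d * j + a) : (ZMod p)ˣ) : ZMod p).val : ℂ) / (p : ℂ))) :
    (((d : ℝ) - 1) * p + 1) ^ 2 / (d : ℝ) ^ 3
      ≤ ∑ s ∈ Finset.range d, ‖η s‖ ^ 4 ∧
    ∑ s ∈ Finset.range d, ‖η s‖ ^ 4
      ≤ (((d : ℝ) - 1) * ((d : ℝ) ^ 2 - 3 * d + 3) * (p : ℝ) ^ 2
          + 4 * ((d : ℝ) - 1) * ((d : ℝ) - 2) * (p : ℝ) ^ ((3 : ℝ) / 2)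
          + 6 * ((d : ℝ) - 1) * p + 1) / (d : ℝ) ^ 3 := by
  have : Fact p.Prime := ⟨hp⟩
  have : NeZero d := ⟨by omega⟩
  have hgk : orderOf g = d * k := by
    rw [orderOf_eq_card_of_forall_mem_zpowers hg, Nat.card_eq_fintype_card, ZMod.card_units, hdk]
  obtain ⟨χ, hχ⟩ := MulChar.exists_apply_eq_of_forall_mem_zpowers (R' := ℂ) hg
    (ω := Circle.toUnits (toCircle (-1 : ZMod d))) (by
      rw [hgk, ← map_pow, ← AddChar.map_nsmul_eq_pow]
      simp)
  have hdft := norm_dft_gaussPeriod (isPrimitive_stdAddChar p) hg hgk hχ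
  rw [ZMod.card] at hdft
  have hV : ∑ s ∈ range d, ‖η s‖ ^ 4 = ∑ a, ‖gaussPeriod stdAddChar g d k a‖ ^ 4 := by
    rw [sum_range_eq_sum_val]
    simp only [hη, gaussPeriod, stdAddChar_apply, toCircle_apply]
  have hsqrt : √p ^ 2 = (p : ℝ) := Real.sq_sqrt (Nat.cast_nonneg p)
  have hp32 : (p : ℝ) ^ ((3 : ℝ) / 2) = p * √p := by
    rw [show (3 : ℝ) / 2 = 1 + 1 / 2 by norm_num, Real.rpow_add (by exact_mod_cast hp.pos),
      Real.rpow_one, Real.sqrt_eq_rpow]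
  rw [hV, hp32]
  constructor
  · refine le_of_eq_of_le ?_ (le_sum_norm_pow_four_of_norm_dft hdft)
    rw [hsqrt]
    ring
  · refine (sum_norm_pow_four_le_of_norm_dft hdft).trans_eq ?_
    generalize √(p : ℝ) = r at hsqrt ⊢
    rw [← hsqrt]
    ring

/-- If `d ∣ p-1` (with `d > 2`), then
`((d-1)p + 1)²/d³ ≤ V₄(p)` and
`V₄(p) ≤ ((d-1)(d² - 3d + 3)p² + 4(d-1)(d-2)p^{3/2} + 6(d-1)p + 1)/d³`. -/
theorem gaussian_periods_V4_bounds (p d k : ℕ) (hp : p.Prime) (hodd : Odd p)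
    (hd : 2 < d) (hdk : p - 1 = d * k)
    (g : (ZMod p)ˣ) (hg : ∀ x : (ZMod p)ˣ, x ∈ Subgroup.zpowers g)
    (η : ℕ → ℂ)
    (hη : ∀ a : ℕ, η a = ∑ j ∈ Finset.range k,
      Complex.exp (2 * (Real.pi : ℂ) * Complex.I *
        (((g ^ (d * j + a) : (ZMod p)ˣ) : ZMod p).val : ℂ) / (p : ℂ))) :
    (((d : ℝ) - 1) * p + 1) ^ 2 / (d : ℝ) ^ 3
      ≤ ∑ s ∈ Finset.range d, ‖η s‖ ^ 4 ∧
    ∑ s ∈ Finset.range d, ‖η s‖ ^ 4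
      ≤ (((d : ℝ) - 1) * ((d : ℝ) ^ 2 - 3 * d + 3) * (p : ℝ) ^ 2
          + 4 * ((d : ℝ) - 1) * ((d : ℝ) - 2) * (p : ℝ) ^ ((3 : ℝ) / 2)
          + 6 * ((d : ℝ) - 1) * p + 1) / (d : ℝ) ^ 3 :=
  gaussian_periods_V4_bounds_general p d k hp hd hdk g hg η hη
end
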